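/- If a vertex cover C of the Hessian graph is fixed and the remaining problem (an MILP in the free variables) has a feasible solution, then combining the fixed values with that solution yields a feasible solution of the original MBQP with objective value equal to the affine objective of the MILP evaluated at that solution. -/
import Mathlib


open Matrix

/-- Undercover: after fixing a vertex cover `C` of the Hessian graph, the
objective is affine in the free variables, and any feasible solution of the
resulting MILP, combined with the fixed values, is feasible for the original
MBQP with matching objective value. -/
theorem undercover_combined_solution {n m : ℕ}
    (H : Matrix (Fin n) (Fin n) ℝ) (c : Fin n → ℝ)
    (A : Matrix (Fin m) (Fin n) ℝ) (b : Fin m → ℝ)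
    (B : Set (Fin n)) (C : Finset (Fin n)) (v : Fin n → ℝ)
    (hC : ∀ i j, H i j ≠ 0 → i ∈ C ∨ j ∈ C)
    (hv : ∀ j ∈ C, (j : Fin n) ∈ B → v j = 0 ∨ v j = 1)
    (f : (Fin n → ℝ) → ℝ)
    (hf : ∀ x, f x = x ⬝ᵥ (H *ᵥ x) + c ⬝ᵥ x) :
    ∃ (a : ℝ) (w : Fin n → ℝ),
      (∀ x : Fin n → ℝ, (∀ j ∈ C, x j = v j) →
        f x = a + ∑ i ∈ Finset.univ \ C, w i * x i) ∧
      (∀ x : Fin n → ℝ, (∀ j ∈ C, x j = v j) →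
        A *ᵥ x ≤ b →
        (∀ j ∈ B, (j : Fin n) ∉ C → x j = 0 ∨ x j = 1) →
        (A *ᵥ x ≤ b ∧ ∀ j ∈ B, x j = 0 ∨ x j = 1) ∧
          f x = a + ∑ i ∈ Finset.univ \ C, w i * x i) := by
  set v' : Fin n → ℝ := fun i => if i ∈ C then v i else 0 with hv'
  set w : Fin n → ℝ := fun j => (v' ᵥ* H) j + (H *ᵥ v') j + c j with hw
  have claim : ∀ x : Fin n → ℝ, (∀ j ∈ C, x j = v j) →
      f x = (v' ⬝ᵥ (H *ᵥ v') + c ⬝ᵥ v') + ∑ i ∈ Finset.univ \ C, w i * x i := by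
    intro x hx
    set y : Fin n → ℝ := fun i => if i ∈ C then 0 else x i with hy
    have hxy : x = v' + y := by
      funext i
      by_cases h : i ∈ C <;> simp [hv', hy, h, hx i]
    have hyy : y ⬝ᵥ (H *ᵥ y) = 0 := by
      simp only [dotProduct, mulVec]
      refine Finset.sum_eq_zero fun i _ => ?_
      by_cases hi : i ∈ C
      · simp [hy, hi]
      · have : (fun j => H i j * y j) = fun _ => 0 := by
          funext j
          by_cases hj : j ∈ C
          · simp [hy, hj]
          · have : H i j = 0 := by
              by_contra h
              rcases hC i j h with h' | h' <;> [exact hi h'; exact hj h']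
            simp [this]
        simp [dotProduct, this]
    have key : ∀ g : Fin n → ℝ, ∑ i ∈ Finset.univ \ C, g i * x i = g ⬝ᵥ y := by
      intro g
      have h1 : g ⬝ᵥ y = ∑ i ∈ Finset.univ \ C, g i * y i :=
        (Finset.sum_subset Finset.sdiff_subset (fun i _ hi => by
          have : i ∈ C := by simpa using hi
          simp [hy, this])).symm
      rw [h1]
      refine Finset.sum_congr rfl fun i hi => ?_
      have : i ∉ C := (Finset.mem_sdiff.mp hi).2
      simp [hy, this]
    have hsum : ∑ i ∈ Finset.univ \ C, w i * x i = w ⬝ᵥ y := key w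
    have hwy : w ⬝ᵥ y = (v' ᵥ* H) ⬝ᵥ y + (H *ᵥ v') ⬝ᵥ y + c ⬝ᵥ y := by
      simp [hw, dotProduct, add_mul, Finset.sum_add_distrib]
    rw [hf, hsum, hwy, hxy]
    rw [mulVec_add, dotProduct_add, dotProduct_add, add_dotProduct,
      add_dotProduct, hyy, dotProduct_mulVec v' H y,
      dotProduct_comm y (H *ᵥ v')]
    ring
  refine ⟨v' ⬝ᵥ (H *ᵥ v') + c ⬝ᵥ v', w, claim, ?_⟩
  intro x hx hAx hB
  refine ⟨⟨hAx, fun j hj => ?_⟩, claim x hx⟩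
  by_cases hjC : j ∈ C
  · rw [hx j hjC]; exact hv j hjC hj
  · exact hB j hj hjC
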